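/- arXiv:1906.01677 — 3 statements merged into one kernel-verified Lean document; each statement's English description precedes it below -/
import Mathlib

section
/- Let n ≥ 1, A > 0, γ > 0, and let β : Fin n → ℝ be costs. For a pure strategy profile δ : Fin n → {0,1}, define the payoff of player j as u_j(δ) = A * (∑_k δ_k)^γ − β_j * δ_j. Suppose β is nondecreasing (β_1 ≤ β_2 ≤ ⋯ ≤ β_n), and for some m with 0 ≤ m ≤ n we have β_m ≤ A·m^γ − A·(m−1)^γ (if m ≥ 1) and β_{m+1} ≥ A·(m+1)^γ − A·m^γ (if m < n). Then the profile δ with δ_j = 1 for j ≤ m and δ_j = 0 for j > m is a pure-strategy Nash equilibrium: no player can strictly increase her payoff by unilaterally switching her own action. -/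
open Finset

/-- Expected payoff of player `j` in the public goods disclosure game:
`A * E[(∑ k, δ k)^γ] - β j * x j` with `δ k ~ Bernoulli (x k)` independent,
convention `0 ^ γ = 0` (Real.rpow). -/
noncomputable def payoff (n : ℕ) (A γ : ℝ) (β : Fin n → ℝ) (j : Fin n)
    (x : Fin n → ℝ) : ℝ :=
  A * ∑ δ : Fin n → Bool,
        ((Finset.univ.filter (fun k => δ k = true)).card : ℝ) ^ γ *
          ∏ k, (if δ k then x k else 1 - x k)
    - β j * x j

/-- Nash equilibrium: no player can strictly improve by a unilateral deviation in `[0,1]`. -/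
def isNash (n : ℕ) (A γ : ℝ) (β : Fin n → ℝ) (x : Fin n → ℝ) : Prop :=
  ∀ j : Fin n, ∀ y ∈ Set.Icc (0:ℝ) 1,
    payoff n A γ β j (Function.update x j y) ≤ payoff n A γ β j x

/-- `C₁^{(j)}(x_{-j})`: expected payoff to player `j` from surely disclosing. -/
noncomputable def C1 (n : ℕ) (A γ : ℝ) (β : Fin n → ℝ) (j : Fin n)
    (x : Fin n → ℝ) : ℝ :=
  A * ∑ δ : {k : Fin n // k ≠ j} → Bool,
        (1 + ((Finset.univ.filter (fun k => δ k = true)).card : ℝ)) ^ γ *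
          ∏ k : {k : Fin n // k ≠ j}, (if δ k then x k.val else 1 - x k.val)
    - β j

/-- `C₀^{(j)}(x_{-j})`: expected payoff to player `j` from surely not disclosing. -/
noncomputable def C0 (n : ℕ) (A γ : ℝ) (j : Fin n)
    (x : Fin n → ℝ) : ℝ :=
  A * ∑ δ : {k : Fin n // k ≠ j} → Bool,
        (((Finset.univ.filter (fun k => δ k = true)).card : ℝ)) ^ γ *
          ∏ k : {k : Fin n // k ≠ j}, (if δ k then x k.val else 1 - x k.val)

/-- Payoff in the pure-strategy game: `A * (#disclosers)^γ - β j * δ j`. -/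
noncomputable def purePayoff (n : ℕ) (A γ : ℝ) (β : Fin n → ℝ) (j : Fin n)
    (δ : Fin n → Bool) : ℝ :=
  A * ((Finset.univ.filter (fun k => δ k = true)).card : ℝ) ^ γ -
    β j * (if δ j then 1 else 0)

lemma card_thresh (n m : ℕ) (hm : m ≤ n) :
    ((univ : Finset (Fin n)).filter (fun k : Fin n => (k : ℕ) < m)).card = m := by
  have : (univ : Finset (Fin n)).filter (fun k : Fin n => (k : ℕ) < m)
      = (univ : Finset (Fin m)).image (Fin.castLE hm) := by
    ext k
    simp only [mem_filter, mem_univ, true_and, mem_image]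
    constructor
    · intro hk; exact ⟨⟨k, hk⟩, rfl⟩
    · rintro ⟨a, -, rfl⟩; exact a.isLt
  rw [this, Finset.card_image_of_injective _ (Fin.castLE_injective hm)]
  simp

/-- sufficient conditions for a threshold pure-strategy Nash equilibrium. -/
theorem stmt0 (n : ℕ) (hn : 1 ≤ n) (A γ : ℝ) (hA : 0 < A) (hγ : 0 < γ)
    (β : Fin n → ℝ) (hβ : Monotone β) (m : ℕ) (hm : m ≤ n)
    (h1 : ∀ i : Fin n, (i : ℕ) + 1 = m →
      β i ≤ A * ((m : ℝ) ^ γ - ((m : ℝ) - 1) ^ γ))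
    (h2 : ∀ i : Fin n, (i : ℕ) = m →
      A * (((m : ℝ) + 1) ^ γ - (m : ℝ) ^ γ) ≤ β i) :
    ∀ j : Fin n,
      purePayoff n A γ β j
          (Function.update (fun k : Fin n => decide ((k : ℕ) < m)) j
            (!decide ((j : ℕ) < m))) ≤
        purePayoff n A γ β j (fun k : Fin n => decide ((k : ℕ) < m)) := by
  intro j
  set δ₀ : Fin n → Bool := fun k : Fin n => decide ((k : ℕ) < m) with hδ₀
  have hS : (univ : Finset (Fin n)).filter (fun k => δ₀ k = true)
      = (univ : Finset (Fin n)).filter (fun k : Fin n => (k : ℕ) < m) := by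
    simp [hδ₀]
  have hcard : ((univ : Finset (Fin n)).filter (fun k => δ₀ k = true)).card = m := by
    rw [hS]; exact card_thresh n m hm
  by_cases hj : (j : ℕ) < m
  · -- deviation: j switches to false
    have hb : (!decide ((j : ℕ) < m)) = false := by simp [hj]
    have hfe : (univ : Finset (Fin n)).filter
        (fun k => Function.update δ₀ j (!decide ((j : ℕ) < m)) k = true)
        = ((univ : Finset (Fin n)).filter (fun k => δ₀ k = true)).erase j := by
      ext k
      rcases eq_or_ne k j with rfl | hk
      · simp [hb]
      · simp [Function.update_of_ne hk, hk]
    have hjS : j ∈ (univ : Finset (Fin n)).filter (fun k => δ₀ k = true) := by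
      simp [hδ₀, hj]
    have hcard' : ((univ : Finset (Fin n)).filter
        (fun k => Function.update δ₀ j (!decide ((j : ℕ) < m)) k = true)).card = m - 1 := by
      rw [hfe, Finset.card_erase_of_mem hjS, hcard]
    have hm1 : 1 ≤ m := Nat.one_le_iff_ne_zero.mpr (by rintro rfl; exact Nat.not_lt_zero _ hj)
    have hmn : m - 1 < n := lt_of_lt_of_le (Nat.sub_lt hm1 one_pos) hm
    rw [hb] at hcard'
    set i : Fin n := ⟨m - 1, hmn⟩ with hi
    have hβj : β j ≤ A * ((m : ℝ) ^ γ - ((m : ℝ) - 1) ^ γ) := by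
      refine le_trans (hβ ?_) (h1 i (by simp [hi, Nat.sub_add_cancel hm1]))
      exact Fin.le_def.mpr (Nat.le_sub_one_of_lt hj)
    have hδj : δ₀ j = true := by simp [hδ₀, hj]
    simp only [purePayoff, hcard, hcard', Function.update_self, hb, hδj,
      if_false, if_true, Bool.false_eq_true]
    have hc : ((m - 1 : ℕ) : ℝ) = (m : ℝ) - 1 := by
      push_cast [hm1]; ring
    rw [hc]
    nlinarith [hβj]
  · -- deviation: j switches to true
    have hb : (!decide ((j : ℕ) < m)) = true := by simp [hj]
    have hfe : (univ : Finset (Fin n)).filter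
        (fun k => Function.update δ₀ j (!decide ((j : ℕ) < m)) k = true)
        = insert j ((univ : Finset (Fin n)).filter (fun k => δ₀ k = true)) := by
      ext k
      rcases eq_or_ne k j with rfl | hk
      · simp [hb]
      · simp [Function.update_of_ne hk, hk]
    have hjS : j ∉ (univ : Finset (Fin n)).filter (fun k => δ₀ k = true) := by
      simp [hδ₀, hj]
    have hcard' : ((univ : Finset (Fin n)).filter
        (fun k => Function.update δ₀ j (!decide ((j : ℕ) < m)) k = true)).card = m + 1 := by
      rw [hfe, Finset.card_insert_of_notMem hjS, hcard]
    have hmn : m < n := lt_of_le_of_lt (Nat.le_of_not_lt hj) j.isLt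
    rw [hb] at hcard'
    set i : Fin n := ⟨m, hmn⟩ with hi
    have hβj : A * (((m : ℝ) + 1) ^ γ - (m : ℝ) ^ γ) ≤ β j := by
      refine le_trans (h2 i (by simp [hi])) (hβ ?_)
      exact Fin.le_def.mpr (Nat.le_of_not_lt hj)
    have hδj : δ₀ j = false := by simp [hδ₀, hj]
    simp only [purePayoff, hcard, hcard', Function.update_self, hb, hδj,
      if_false, if_true, Bool.false_eq_true]
    have hc : ((m + 1 : ℕ) : ℝ) = (m : ℝ) + 1 := by push_cast; ring
    rw [hc]
    nlinarith [hβj]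
end

section
/- In the public goods disclosure game, for any fixed strategies x_{−j} ∈ [0,1]^{n−1} of the other players, C₁^{(j)}(x_{−j}) − C₀^{(j)}(x_{−j}) + β_j = A·E[(1 + S)^γ − S^γ] where S = ∑_{k≠j} δ_k with δ_k ~ Bernoulli(x_k) independent. If 0 < γ ≤ 1, then this quantity satisfies A·((n)^γ − (n−1)^γ) ≤ C₁^{(j)} − C₀^{(j)} + β_j ≤ A (with the upper bound A = A·(1^γ − 0^γ)). Hence if β_j > A then player j's unique best response is x_j = 0 regardless of the others' strategies, and if β_j < A·(n^γ − (n−1)^γ) then her unique best response is x_j = 1. -/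
open Finset

private lemma sum_split {n : ℕ} (j : Fin n) {M : Type*} [AddCommMonoid M] (f : Fin n → M) :
    ∑ k, f k = f j + ∑ k : {k : Fin n // k ≠ j}, f k := by
  rw [← Finset.add_sum_erase _ _ (mem_univ j)]
  congr 1
  exact (Finset.sum_subtype (p := fun k => k ≠ j) (univ.erase j) (fun x => by simp) f)

private lemma prod_split {n : ℕ} (j : Fin n) (f : Fin n → ℝ) :
    ∏ k, f k = f j * ∏ k : {k : Fin n // k ≠ j}, f k := by
  rw [← Finset.mul_prod_erase _ _ (mem_univ j)]
  congr 1
  exact (Finset.prod_subtype (p := fun k => k ≠ j) (univ.erase j) (fun x => by simp) f)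

private lemma card_split {n : ℕ} (j : Fin n) (δ : Fin n → Bool) :
    (univ.filter (fun k => δ k = true)).card
      = (if δ j = true then 1 else 0)
        + (univ.filter (fun k : {k : Fin n // k ≠ j} => δ k.val = true)).card := by
  rw [Finset.card_filter, Finset.card_filter, sum_split j]

private lemma rpow_shift {γ : ℝ} (hγ0 : 0 ≤ γ) (hγ1 : γ ≤ 1) {a b : ℝ} (ha : 0 ≤ a)
    (hab : a ≤ b) : a ^ γ + (b + 1) ^ γ ≤ (a + 1) ^ γ + b ^ γ := by
  have hb : 0 ≤ b := ha.trans hab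
  have hcc := Real.concaveOn_rpow hγ0 hγ1
  have hs0 : (0:ℝ) < b + 1 - a := by linarith
  set t : ℝ := 1 / (b + 1 - a) with ht
  have hts : t * (b + 1 - a) = 1 := by
    rw [ht]; field_simp
  have ht0 : 0 ≤ t := by positivity
  have ht1 : t ≤ 1 := by
    rw [ht, div_le_one hs0]; linarith
  have hb1 : (0:ℝ) ≤ b + 1 := by linarith
  have key1 := hcc.2 (Set.mem_Ici.2 ha) (Set.mem_Ici.2 hb1)
    (by linarith : (0:ℝ) ≤ 1 - t) ht0 (by ring)
  have key2 := hcc.2 (Set.mem_Ici.2 ha) (Set.mem_Ici.2 hb1)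
    ht0 (by linarith : (0:ℝ) ≤ 1 - t) (by ring)
  simp only [smul_eq_mul] at key1 key2
  have e1 : (1 - t) * a + t * (b + 1) = a + 1 := by linear_combination hts
  have e2 : t * a + (1 - t) * (b + 1) = b := by linear_combination -hts
  rw [e1] at key1
  rw [e2] at key2
  linarith

private lemma weight_sum {n : ℕ} (j : Fin n) (x : Fin n → ℝ) :
    ∑ ε : {k : Fin n // k ≠ j} → Bool,
      ∏ k : {k : Fin n // k ≠ j}, (if ε k then x k.val else 1 - x k.val) = 1 := by
  rw [← Fintype.prod_sum (fun (k : {k : Fin n // k ≠ j}) (b : Bool) =>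
      if b then x k.val else 1 - x k.val)]
  have : ∀ k : {k : Fin n // k ≠ j},
      ∑ b : Bool, (if b then x k.val else 1 - x k.val) = 1 := by
    intro k
    rw [Fintype.sum_bool]
    simp
  rw [Fintype.prod_congr _ _ this]
  simp

private lemma key {n : ℕ} (j : Fin n) (γ : ℝ) (z : Fin n → ℝ) :
    ∑ δ : Fin n → Bool, ((univ.filter (fun k => δ k = true)).card : ℝ) ^ γ *
        ∏ k, (if δ k then z k else 1 - z k)
    = z j * ∑ ε : {k : Fin n // k ≠ j} → Bool,
        (1 + ((univ.filter (fun k => ε k = true)).card : ℝ)) ^ γ *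
          ∏ k : {k : Fin n // k ≠ j}, (if ε k then z k.val else 1 - z k.val)
    + (1 - z j) * ∑ ε : {k : Fin n // k ≠ j} → Bool,
        (((univ.filter (fun k => ε k = true)).card : ℝ)) ^ γ *
          ∏ k : {k : Fin n // k ≠ j}, (if ε k then z k.val else 1 - z k.val) := by
  rw [← Equiv.sum_comp (Equiv.funSplitAt j Bool).symm, Fintype.sum_prod_type, Fintype.sum_bool,
    Finset.mul_sum, Finset.mul_sum]
  congr 1
  · refine Fintype.sum_congr _ _ fun ε => ?_
    have h1 : (Equiv.funSplitAt j Bool).symm (true, ε) j = true := by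
      simp [Equiv.funSplitAt, Equiv.piSplitAt]
    have h2 : ∀ (k : {k : Fin n // k ≠ j}),
        (Equiv.funSplitAt j Bool).symm (true, ε) k.val = ε k := by
      intro k; simp [Equiv.funSplitAt, Equiv.piSplitAt, k.prop]
    have hcnat : (univ.filter (fun k => (Equiv.funSplitAt j Bool).symm (true, ε) k = true)).card
        = 1 + (univ.filter (fun k : {k : Fin n // k ≠ j} => ε k = true)).card := by
      rw [card_split j, h1]
      congr 1
      exact congrArg Finset.card (Finset.filter_congr fun k _ => by rw [h2 k])
    have hp : (∏ k, (if (Equiv.funSplitAt j Bool).symm (true, ε) k then z k else 1 - z k))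
        = z j * ∏ k : {k : Fin n // k ≠ j}, (if ε k then z k.val else 1 - z k.val) := by
      rw [prod_split j, h1]
      simp only [if_true]
      congr 1
      exact Fintype.prod_congr _ _ fun k => by rw [h2 k]
    rw [hp, hcnat]
    push_cast
    ring
  · refine Fintype.sum_congr _ _ fun ε => ?_
    have h1 : (Equiv.funSplitAt j Bool).symm (false, ε) j = false := by
      simp [Equiv.funSplitAt, Equiv.piSplitAt]
    have h2 : ∀ (k : {k : Fin n // k ≠ j}),
        (Equiv.funSplitAt j Bool).symm (false, ε) k.val = ε k := by
      intro k; simp [Equiv.funSplitAt, Equiv.piSplitAt, k.prop]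
    have hcnat : (univ.filter (fun k => (Equiv.funSplitAt j Bool).symm (false, ε) k = true)).card
        = (univ.filter (fun k : {k : Fin n // k ≠ j} => ε k = true)).card := by
      rw [card_split j, h1]
      simp only [Bool.false_eq_true, if_false, zero_add]
      exact congrArg Finset.card (Finset.filter_congr fun k _ => by rw [h2 k])
    have hp : (∏ k, (if (Equiv.funSplitAt j Bool).symm (false, ε) k then z k else 1 - z k))
        = (1 - z j) * ∏ k : {k : Fin n // k ≠ j}, (if ε k then z k.val else 1 - z k.val) := by
      rw [prod_split j, h1]
      simp only [Bool.false_eq_true, if_false]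
      congr 1
      exact Fintype.prod_congr _ _ fun k => by rw [h2 k]
    rw [hp, hcnat]
    ring

private lemma payoff_update {n : ℕ} (A γ : ℝ) (β : Fin n → ℝ) (j : Fin n) (x : Fin n → ℝ)
    (y : ℝ) :
    payoff n A γ β j (Function.update x j y)
      = C0 n A γ j x + y * ((C1 n A γ β j x + β j) - C0 n A γ j x) - β j * y := by
  unfold payoff C0 C1
  rw [key j γ (Function.update x j y), Function.update_self]
  have hE : ∀ (ε : {k : Fin n // k ≠ j} → Bool),
      (∏ k : {k : Fin n // k ≠ j},
        (if ε k then Function.update x j y k.val else 1 - Function.update x j y k.val))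
      = ∏ k : {k : Fin n // k ≠ j}, (if ε k then x k.val else 1 - x k.val) := fun ε =>
    Fintype.prod_congr _ _ fun k => by rw [Function.update_of_ne k.prop]
  simp only [hE]
  ring

/-- `C₁ - C₀ + β j = A E[(1+S)^γ - S^γ]`, bounds for `0 < γ ≤ 1`,
and the resulting dominant strategies. -/
theorem stmt10 (n : ℕ) (hn : 1 ≤ n) (A γ : ℝ) (hA : 0 < A)
    (hγ : 0 < γ) (hγ1 : γ ≤ 1)
    (β : Fin n → ℝ) (j : Fin n) (x : Fin n → ℝ)
    (hx : ∀ k, k ≠ j → x k ∈ Set.Icc (0:ℝ) 1) :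
    (C1 n A γ β j x - C0 n A γ j x + β j =
      A * ∑ δ : {k : Fin n // k ≠ j} → Bool,
        ((1 + ((Finset.univ.filter (fun k => δ k = true)).card : ℝ)) ^ γ -
            ((Finset.univ.filter (fun k => δ k = true)).card : ℝ) ^ γ) *
          ∏ k : {k : Fin n // k ≠ j}, (if δ k then x k.val else 1 - x k.val)) ∧
    A * ((n : ℝ) ^ γ - ((n : ℝ) - 1) ^ γ) ≤
      C1 n A γ β j x - C0 n A γ j x + β j ∧
    C1 n A γ β j x - C0 n A γ j x + β j ≤ A ∧
    (A < β j → ∀ y ∈ Set.Icc (0:ℝ) 1, y ≠ 0 →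
      payoff n A γ β j (Function.update x j y) <
        payoff n A γ β j (Function.update x j 0)) ∧
    (β j < A * ((n : ℝ) ^ γ - ((n : ℝ) - 1) ^ γ) →
      ∀ y ∈ Set.Icc (0:ℝ) 1, y ≠ 1 →
        payoff n A γ β j (Function.update x j y) <
          payoff n A γ β j (Function.update x j 1)) := by
  classical
  have hsplit : (∑ δ : {k : Fin n // k ≠ j} → Bool,
      ((1 + ((Finset.univ.filter (fun k => δ k = true)).card : ℝ)) ^ γ -
          ((Finset.univ.filter (fun k => δ k = true)).card : ℝ) ^ γ) *
        ∏ k : {k : Fin n // k ≠ j}, (if δ k then x k.val else 1 - x k.val))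
      = (∑ δ : {k : Fin n // k ≠ j} → Bool,
          (1 + ((Finset.univ.filter (fun k => δ k = true)).card : ℝ)) ^ γ *
            ∏ k : {k : Fin n // k ≠ j}, (if δ k then x k.val else 1 - x k.val))
        - ∑ δ : {k : Fin n // k ≠ j} → Bool,
            ((Finset.univ.filter (fun k => δ k = true)).card : ℝ) ^ γ *
              ∏ k : {k : Fin n // k ≠ j}, (if δ k then x k.val else 1 - x k.val) := by
    rw [← Finset.sum_sub_distrib]
    exact Fintype.sum_congr _ _ fun δ => sub_mul _ _ _
  have part1 : C1 n A γ β j x - C0 n A γ j x + β j =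
      A * ∑ δ : {k : Fin n // k ≠ j} → Bool,
        ((1 + ((Finset.univ.filter (fun k => δ k = true)).card : ℝ)) ^ γ -
            ((Finset.univ.filter (fun k => δ k = true)).card : ℝ) ^ γ) *
          ∏ k : {k : Fin n // k ≠ j}, (if δ k then x k.val else 1 - x k.val) := by
    unfold C1 C0
    rw [hsplit]
    ring
  -- weights are nonnegative and sum to 1
  have hw0 : ∀ δ : {k : Fin n // k ≠ j} → Bool,
      0 ≤ ∏ k : {k : Fin n // k ≠ j}, (if δ k then x k.val else 1 - x k.val) := by
    intro δ
    refine Finset.prod_nonneg fun k _ => ?_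
    obtain ⟨h0, h1⟩ := hx k.val k.prop
    split_ifs <;> linarith
  have hw1 := weight_sum j x
  -- cardinality bound
  have hcardn : ∀ δ : {k : Fin n // k ≠ j} → Bool,
      ((Finset.univ.filter (fun k => δ k = true)).card : ℝ) ≤ (n : ℝ) - 1 := by
    intro δ
    have h1 : (Finset.univ.filter (fun k : {k : Fin n // k ≠ j} => δ k = true)).card
        ≤ Fintype.card {k : Fin n // k ≠ j} :=
      (Finset.card_filter_le _ _).trans (le_of_eq Finset.card_univ)
    have h2 : n = 1 + Fintype.card {k : Fin n // k ≠ j} := by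
      have := sum_split j (fun _ : Fin n => (1 : ℕ))
      simpa using this
    have h3 : ((Fintype.card {k : Fin n // k ≠ j} : ℕ) : ℝ) = (n : ℝ) - 1 := by
      have h4 : ((n : ℕ) : ℝ) = 1 + ((Fintype.card {k : Fin n // k ≠ j} : ℕ) : ℝ) := by
        exact_mod_cast congrArg (fun m : ℕ => (m : ℝ)) h2
      linarith
    calc ((Finset.univ.filter (fun k : {k : Fin n // k ≠ j} => δ k = true)).card : ℝ)
        ≤ ((Fintype.card {k : Fin n // k ≠ j} : ℕ) : ℝ) := by exact_mod_cast h1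
      _ = (n : ℝ) - 1 := h3
  -- pointwise bounds on (1+m)^γ - m^γ
  have hub : ∀ δ : {k : Fin n // k ≠ j} → Bool,
      (1 + ((Finset.univ.filter (fun k => δ k = true)).card : ℝ)) ^ γ -
        ((Finset.univ.filter (fun k => δ k = true)).card : ℝ) ^ γ ≤ 1 := by
    intro δ
    set m : ℝ := ((Finset.univ.filter (fun k : {k : Fin n // k ≠ j} => δ k = true)).card : ℝ)
    have hm0 : 0 ≤ m := Nat.cast_nonneg _
    have h := rpow_shift hγ.le hγ1 le_rfl hm0
    rw [Real.zero_rpow hγ.ne', zero_add, zero_add, Real.one_rpow] at h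
    have heq : (1 + m) ^ γ = (m + 1) ^ γ := by rw [add_comm]
    linarith
  have hlb : ∀ δ : {k : Fin n // k ≠ j} → Bool,
      (n : ℝ) ^ γ - ((n : ℝ) - 1) ^ γ ≤
        (1 + ((Finset.univ.filter (fun k => δ k = true)).card : ℝ)) ^ γ -
          ((Finset.univ.filter (fun k => δ k = true)).card : ℝ) ^ γ := by
    intro δ
    set m : ℝ := ((Finset.univ.filter (fun k : {k : Fin n // k ≠ j} => δ k = true)).card : ℝ)
    have hm0 : 0 ≤ m := Nat.cast_nonneg _
    have h := rpow_shift hγ.le hγ1 hm0 (hcardn δ)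
    have hn1 : (n : ℝ) - 1 + 1 = (n : ℝ) := by ring
    rw [hn1] at h
    have heq : (1 + m) ^ γ = (m + 1) ^ γ := by rw [add_comm]
    linarith
  -- bounds on the expectation
  have hS_ub : (∑ δ : {k : Fin n // k ≠ j} → Bool,
      ((1 + ((Finset.univ.filter (fun k => δ k = true)).card : ℝ)) ^ γ -
          ((Finset.univ.filter (fun k => δ k = true)).card : ℝ) ^ γ) *
        ∏ k : {k : Fin n // k ≠ j}, (if δ k then x k.val else 1 - x k.val)) ≤ 1 := by
    calc (∑ δ : {k : Fin n // k ≠ j} → Bool,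
        ((1 + ((Finset.univ.filter (fun k => δ k = true)).card : ℝ)) ^ γ -
            ((Finset.univ.filter (fun k => δ k = true)).card : ℝ) ^ γ) *
          ∏ k : {k : Fin n // k ≠ j}, (if δ k then x k.val else 1 - x k.val))
        ≤ ∑ δ : {k : Fin n // k ≠ j} → Bool,
            1 * ∏ k : {k : Fin n // k ≠ j}, (if δ k then x k.val else 1 - x k.val) :=
          Finset.sum_le_sum fun δ _ => mul_le_mul_of_nonneg_right (hub δ) (hw0 δ)
      _ = 1 := by
          simp only [one_mul]
          exact hw1
  have hS_lb : (n : ℝ) ^ γ - ((n : ℝ) - 1) ^ γ ≤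
      ∑ δ : {k : Fin n // k ≠ j} → Bool,
        ((1 + ((Finset.univ.filter (fun k => δ k = true)).card : ℝ)) ^ γ -
            ((Finset.univ.filter (fun k => δ k = true)).card : ℝ) ^ γ) *
          ∏ k : {k : Fin n // k ≠ j}, (if δ k then x k.val else 1 - x k.val) := by
    calc (n : ℝ) ^ γ - ((n : ℝ) - 1) ^ γ
        = ∑ δ : {k : Fin n // k ≠ j} → Bool,
            ((n : ℝ) ^ γ - ((n : ℝ) - 1) ^ γ) *
              ∏ k : {k : Fin n // k ≠ j}, (if δ k then x k.val else 1 - x k.val) := by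
          rw [← Finset.mul_sum, hw1, mul_one]
      _ ≤ _ := Finset.sum_le_sum fun δ _ => mul_le_mul_of_nonneg_right (hlb δ) (hw0 δ)
  have part2 : A * ((n : ℝ) ^ γ - ((n : ℝ) - 1) ^ γ) ≤
      C1 n A γ β j x - C0 n A γ j x + β j := by
    rw [part1]
    exact mul_le_mul_of_nonneg_left hS_lb hA.le
  have part3 : C1 n A γ β j x - C0 n A γ j x + β j ≤ A := by
    rw [part1]
    calc A * _ ≤ A * 1 := mul_le_mul_of_nonneg_left hS_ub hA.le
      _ = A := mul_one A
  have hpay : ∀ y : ℝ, payoff n A γ β j (Function.update x j y) =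
      C0 n A γ j x + y * ((C1 n A γ β j x - C0 n A γ j x + β j) - β j) := by
    intro y
    rw [payoff_update]
    ring
  refine ⟨part1, part2, part3, ?_, ?_⟩
  · intro hAβ y hy hy0
    rw [hpay y, hpay 0]
    have hneg : (C1 n A γ β j x - C0 n A γ j x + β j) - β j < 0 := by linarith
    have hy' : 0 < y := lt_of_le_of_ne hy.1 (Ne.symm hy0)
    nlinarith
  · intro hβ y hy hy1
    rw [hpay y, hpay 1]
    have hpos : 0 < (C1 n A γ β j x - C0 n A γ j x + β j) - β j := by linarith
    have hy' : y < 1 := lt_of_le_of_ne hy.2 hy1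
    nlinarith
end

section
/- Consider the symmetric n-player public goods disclosure game (β_j = β for all j) with A > 0, 0 < γ < 1. If A·(n^γ − (n−1)^γ) < β < A, then there exists a symmetric mixed-strategy Nash equilibrium x_1 = ⋯ = x_n = p with p ∈ (0,1), characterized by A·∑_{m=0}^{n−1} C(n−1,m) p^m (1−p)^{n−1−m} ((m+1)^γ − m^γ) = β. -/
open Finset

lemma C1_update (n : ℕ) (A γ : ℝ) (β : Fin n → ℝ) (j : Fin n) (x : Fin n → ℝ) (y : ℝ) :
    C1 n A γ β j (Function.update x j y) = C1 n A γ β j x := by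
  unfold C1
  congr 1
  congr 1
  refine Fintype.sum_congr _ _ fun δ => ?_
  congr 1
  exact Fintype.prod_congr _ _ fun k => by rw [Function.update_of_ne k.2]

lemma C0_update (n : ℕ) (A γ : ℝ) (j : Fin n) (x : Fin n → ℝ) (y : ℝ) :
    C0 n A γ j (Function.update x j y) = C0 n A γ j x := by
  unfold C0
  congr 1
  refine Fintype.sum_congr _ _ fun δ => ?_
  congr 1
  exact Fintype.prod_congr _ _ fun k => by rw [Function.update_of_ne k.2]

lemma sum_bool_card {ι : Type*} [Fintype ι] [DecidableEq ι] (p : ℝ) (g : ℕ → ℝ) :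
    ∑ δ : ι → Bool, g (univ.filter (fun k => δ k = true)).card *
        ∏ k, (if δ k then p else 1 - p)
      = ∑ m ∈ Finset.range (Fintype.card ι + 1),
          (Nat.choose (Fintype.card ι) m : ℝ) * p ^ m * (1 - p) ^ (Fintype.card ι - m) * g m := by
  let e : (ι → Bool) ≃ Finset ι :=
    { toFun := fun δ => univ.filter (fun k => δ k = true)
      invFun := fun S k => decide (k ∈ S)
      left_inv := by intro δ; funext k; simp
      right_inv := by intro S; ext k; simp }
  have h1 : ∀ δ : ι → Bool, (∏ k, (if δ k then p else 1 - p))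
      = p ^ (univ.filter (fun k => δ k = true)).card *
        (1 - p) ^ (Fintype.card ι - (univ.filter (fun k => δ k = true)).card) := by
    intro δ
    rw [Finset.prod_ite, Finset.prod_const, Finset.prod_const]
    congr 2
    rw [Finset.filter_not, Finset.card_sdiff_of_subset (Finset.filter_subset _ _), Finset.card_univ]
  calc ∑ δ : ι → Bool, g (univ.filter (fun k => δ k = true)).card *
        ∏ k, (if δ k then p else 1 - p)
      = ∑ δ : ι → Bool, g (e δ).card * (p ^ (e δ).card * (1 - p) ^ (Fintype.card ι - (e δ).card)) := by
        exact Fintype.sum_congr _ _ fun δ => by rw [h1 δ]; rfl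
    _ = ∑ S : Finset ι, g S.card * (p ^ S.card * (1 - p) ^ (Fintype.card ι - S.card)) :=
        Fintype.sum_equiv e _ _ (fun δ => rfl)
    _ = ∑ S ∈ (univ : Finset ι).powerset, g S.card * (p ^ S.card * (1 - p) ^ (Fintype.card ι - S.card)) := by
        rw [Finset.powerset_univ]
    _ = ∑ m ∈ Finset.range (Fintype.card ι + 1),
          (Nat.choose (Fintype.card ι) m : ℝ) * p ^ m * (1 - p) ^ (Fintype.card ι - m) * g m := by
        rw [Finset.sum_powerset_apply_card (fun m => g m * (p ^ m * (1 - p) ^ (Fintype.card ι - m)))]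
        rw [Finset.card_univ]
        exact Finset.sum_congr rfl fun m _ => by rw [nsmul_eq_mul]; ring

lemma card_subtype_ne' (n : ℕ) (j : Fin n) : Fintype.card {k : Fin n // k ≠ j} = n - 1 := by
  have := Fintype.card_subtype_compl (fun k : Fin n => k = j)
  simpa [Fintype.card_subtype_eq] using this

lemma key_sum (n : ℕ) (hn : 1 ≤ n) (p : ℝ) (j : Fin n) (g : ℕ → ℝ) :
    ∑ δ : {k : Fin n // k ≠ j} → Bool,
        g (univ.filter (fun k => δ k = true)).card *
          ∏ k : {k : Fin n // k ≠ j}, (if δ k then p else 1 - p)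
      = ∑ m ∈ Finset.range n,
          (Nat.choose (n - 1) m : ℝ) * p ^ m * (1 - p) ^ (n - 1 - m) * g m := by
  rw [sum_bool_card p g, card_subtype_ne' n j, (by omega : n - 1 + 1 = n)]

lemma payoff_decomp (n : ℕ) (A γ : ℝ) (β : Fin n → ℝ) (j : Fin n) (x : Fin n → ℝ) :
    payoff n A γ β j x = x j * C1 n A γ β j x + (1 - x j) * C0 n A γ j x := by
  unfold payoff C1 C0
  have key : ∑ δ : Fin n → Bool,
        ((Finset.univ.filter (fun k => δ k = true)).card : ℝ) ^ γ *
          ∏ k, (if δ k then x k else 1 - x k)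
      = x j * ∑ δ : {k : Fin n // k ≠ j} → Bool,
          (1 + ((Finset.univ.filter (fun k => δ k = true)).card : ℝ)) ^ γ *
            ∏ k : {k : Fin n // k ≠ j}, (if δ k then x k.val else 1 - x k.val)
        + (1 - x j) * ∑ δ : {k : Fin n // k ≠ j} → Bool,
          (((Finset.univ.filter (fun k => δ k = true)).card : ℝ)) ^ γ *
            ∏ k : {k : Fin n // k ≠ j}, (if δ k then x k.val else 1 - x k.val) := by
    rw [← Equiv.sum_comp (Equiv.funSplitAt j Bool).symm]
    rw [Fintype.sum_prod_type, Fintype.sum_bool]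
    have hval : ∀ (b : Bool) (δ' : {k : Fin n // k ≠ j} → Bool),
        ((Equiv.funSplitAt j Bool).symm (b, δ')) j = b := by
      intro b δ'; simp [Equiv.funSplitAt]
    have hval2 : ∀ (b : Bool) (δ' : {k : Fin n // k ≠ j} → Bool) (k : Fin n) (h : k ≠ j),
        ((Equiv.funSplitAt j Bool).symm (b, δ')) k = δ' ⟨k, h⟩ := by
      intro b δ' k h; simp [Equiv.funSplitAt, h]
    have hcard : ∀ (b : Bool) (δ' : {k : Fin n // k ≠ j} → Bool),
        (Finset.univ.filter (fun k => ((Equiv.funSplitAt j Bool).symm (b, δ')) k = true)).card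
        = (if b then 1 else 0) +
          (Finset.univ.filter (fun k : {k : Fin n // k ≠ j} => δ' k = true)).card := by
      intro b δ'
      rw [Finset.card_filter, Finset.card_filter,
        ← Finset.add_sum_erase _ _ (Finset.mem_univ j)]
      congr 1
      · rw [hval]
      · rw [Finset.sum_subtype (Finset.univ.erase j)
          (fun k => by simp : ∀ k, k ∈ Finset.univ.erase j ↔ k ≠ j)]
        exact Fintype.sum_congr _ _ fun k => by rw [hval2 b δ' k.val k.2]
    have hprod : ∀ (b : Bool) (δ' : {k : Fin n // k ≠ j} → Bool),
        (∏ k, (if ((Equiv.funSplitAt j Bool).symm (b, δ')) k then x k else 1 - x k))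
        = (if b then x j else 1 - x j) *
          ∏ k : {k : Fin n // k ≠ j}, (if δ' k then x k.val else 1 - x k.val) := by
      intro b δ'
      rw [← Finset.mul_prod_erase _ _ (Finset.mem_univ j), hval]
      congr 1
      rw [Finset.prod_subtype (Finset.univ.erase j)
        (fun k => by simp : ∀ k, k ∈ Finset.univ.erase j ↔ k ≠ j)]
      exact Fintype.prod_congr _ _ fun k => by rw [hval2 b δ' k.val k.2]
    have h1 : ∑ δ' : {k : Fin n // k ≠ j} → Bool,
        ((Finset.univ.filter (fun k => ((Equiv.funSplitAt j Bool).symm (true, δ')) k = true)).card : ℝ) ^ γ *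
          ∏ k, (if ((Equiv.funSplitAt j Bool).symm (true, δ')) k then x k else 1 - x k)
        = x j * ∑ δ' : {k : Fin n // k ≠ j} → Bool,
          (1 + ((Finset.univ.filter (fun k => δ' k = true)).card : ℝ)) ^ γ *
            ∏ k : {k : Fin n // k ≠ j}, (if δ' k then x k.val else 1 - x k.val) := by
      rw [Finset.mul_sum]
      refine Fintype.sum_congr _ _ fun δ' => ?_
      rw [hcard, hprod]
      push_cast
      simp
      ring_nf
    have h0 : ∑ δ' : {k : Fin n // k ≠ j} → Bool,
        ((Finset.univ.filter (fun k => ((Equiv.funSplitAt j Bool).symm (false, δ')) k = true)).card : ℝ) ^ γ *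
          ∏ k, (if ((Equiv.funSplitAt j Bool).symm (false, δ')) k then x k else 1 - x k)
        = (1 - x j) * ∑ δ' : {k : Fin n // k ≠ j} → Bool,
          (((Finset.univ.filter (fun k => δ' k = true)).card : ℝ)) ^ γ *
            ∏ k : {k : Fin n // k ≠ j}, (if δ' k then x k.val else 1 - x k.val) := by
      rw [Finset.mul_sum]
      refine Fintype.sum_congr _ _ fun δ' => ?_
      rw [hcard, hprod]
      push_cast
      simp
      ring_nf
    rw [h1, h0]
  rw [key]
  ring


/-- existence of an interior symmetric mixed equilibrium when
`A (n^γ - (n-1)^γ) < β < A`, characterized by the binomial indifference condition. -/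
theorem stmt11 (n : ℕ) (hn : 1 ≤ n) (A γ β : ℝ) (hA : 0 < A)
    (hγ : 0 < γ) (hγ1 : γ < 1)
    (hlb : A * ((n : ℝ) ^ γ - ((n : ℝ) - 1) ^ γ) < β) (hub : β < A) :
    ∃ p : ℝ, p ∈ Set.Ioo (0:ℝ) 1 ∧
      isNash n A γ (fun _ => β) (fun _ => p) ∧
      A * ∑ m ∈ Finset.range n,
          (Nat.choose (n - 1) m : ℝ) * p ^ m * (1 - p) ^ (n - 1 - m) *
            (((m : ℝ) + 1) ^ γ - (m : ℝ) ^ γ) = β := by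
  set F : ℝ → ℝ := fun p => A * ∑ m ∈ Finset.range n,
      (Nat.choose (n - 1) m : ℝ) * p ^ m * (1 - p) ^ (n - 1 - m) *
        (((m : ℝ) + 1) ^ γ - (m : ℝ) ^ γ) with hFdef
  have hcont : ContinuousOn F (Set.Icc 0 1) := by
    apply Continuous.continuousOn
    apply continuous_const.mul
    apply continuous_finset_sum
    intro m _
    fun_prop
  have hF0 : F 0 = A := by
    rw [hFdef]
    simp only
    rw [Finset.sum_eq_single 0]
    · simp [Real.zero_rpow hγ.ne']
    · intro m _ hm
      simp [zero_pow hm]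
    · intro h
      exact absurd (Finset.mem_range.2 (by omega)) h
  have hF1 : F 1 = A * ((n : ℝ) ^ γ - ((n : ℝ) - 1) ^ γ) := by
    rw [hFdef]
    simp only
    rw [Finset.sum_eq_single (n - 1)]
    · have h1 : ((n - 1 : ℕ) : ℝ) = (n : ℝ) - 1 := by
        push_cast [Nat.cast_sub hn]; ring
      have h2 : ((n - 1 : ℕ) : ℝ) + 1 = (n : ℝ) := by rw [h1]; ring
      simp [Nat.sub_self, h1, h2]
    · intro m hm hne
      have : (1 : ℝ) - 1 = 0 := by ring
      rw [this, zero_pow (by rw [Finset.mem_range] at hm; omega)]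
      ring
    · intro h
      exact absurd (Finset.mem_range.2 (by omega)) h
  obtain ⟨p, hp, hFp⟩ := intermediate_value_Ioo' (by norm_num : (0:ℝ) ≤ 1) hcont
    (by rw [hF0, hF1]; exact ⟨hlb, hub⟩)
  refine ⟨p, hp, ?_, hFp⟩
  -- indifference: C1 = C0 at the symmetric profile
  have hC : ∀ j : Fin n, C1 n A γ (fun _ => β) j (fun _ => p) = C0 n A γ j (fun _ => p) := by
    intro j
    show A * _ - β = A * _
    rw [key_sum n hn p j (fun m => (1 + (m : ℝ)) ^ γ),
        key_sum n hn p j (fun m => ((m : ℝ)) ^ γ)]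
    have : A * ∑ m ∈ Finset.range n,
        (Nat.choose (n - 1) m : ℝ) * p ^ m * (1 - p) ^ (n - 1 - m) * (1 + (m : ℝ)) ^ γ
      - A * ∑ m ∈ Finset.range n,
        (Nat.choose (n - 1) m : ℝ) * p ^ m * (1 - p) ^ (n - 1 - m) * ((m : ℝ)) ^ γ = β := by
      rw [← mul_sub, ← Finset.sum_sub_distrib, ← hFp, hFdef]
      simp only
      congr 1
      refine Finset.sum_congr rfl fun m _ => ?_
      rw [add_comm (1:ℝ) (m:ℝ)]
      ring
    linarith [this]
  intro j y hy
  rw [payoff_decomp n A γ (fun _ => β) j (Function.update (fun _ => p) j y),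
      payoff_decomp n A γ (fun _ => β) j (fun _ => p),
      C1_update, C0_update, Function.update_self, hC j]
  have h : ∀ t : ℝ, t * C0 n A γ j (fun _ => p) + (1 - t) * C0 n A γ j (fun _ => p)
      = C0 n A γ j (fun _ => p) := fun t => by ring
  rw [h y, h p]
end
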